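/- For every reduced π-ordered BDD B over a finite set PVar of Boolean variables and Act, and every bijection γ from PVar onto a set of axis-aligned predicates, there exists a reduced π-ordered BDD B' over PVar and Act that is predicate consistent with respect to γ and has the same semantics modulo γ as B, i.e. ⟦B'⟧(γ^ε) = ⟦B⟧(γ^ε) for every evaluation ε : Var → D. -/

import Mathlib

/-- Comparison relations for axis-aligned predicates. -/
inductive Cmp where
  | eq | ge | gt
deriving DecidableEq

/-- An axis-aligned predicate `x ∼ c` over variables `Var` and domain `ℚ`. -/
structure APred (Var : Type) where
  x : Var
  cmp : Cmp
  c : ℚ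

/-- Satisfaction of an axis-aligned predicate by an evaluation `ε : Var → ℚ`. -/
def APred.holds {Var : Type} (ε : Var → ℚ) (p : APred Var) : Bool :=
  match p.cmp with
  | .eq => decide (ε p.x = p.c)
  | .ge => decide (p.c ≤ ε p.x)
  | .gt => decide (p.c < ε p.x)

/-- A (multi-terminal) decision diagram with decision nodes labeled by `L`
and action nodes labeled by subsets of `Act`.  A rank function ensures
acyclicity.  Taking `L` to be a type of Boolean variables yields BDDs;
taking `L = APred Var` yields PDDs. -/
structure DD (L : Type) (Act : Type) where
  /-- the (finite) set of nodes -/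
  N : Type
  fin : Fintype N
  /-- decision nodes are labeled by `Sum.inl l` with `l : L`;
  action nodes are labeled by `Sum.inr A` with `A ⊆ Act`. -/
  label : N → L ⊕ Set Act
  /-- successor function (its values on action nodes are irrelevant) -/
  succ : N → Bool → N
  root : N
  rk : N → ℕ
  rk_lt : ∀ n b l, label n = Sum.inl l → rk (succ n b) < rk n

/-- Semantics of the subdiagram rooted at `n`, given a Boolean valuation of labels. -/
def DD.semNode {L Act : Type} (B : DD L Act) (f : L → Bool) (n : B.N) : Set Act :=
  match h : B.label n with
  | Sum.inr A => A
  | Sum.inl l => B.semNode f (B.succ n (f l))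
termination_by B.rk n
decreasing_by exact B.rk_lt n (f l) l h

/-- Semantics of a decision diagram, given a Boolean valuation of its labels. -/
def DD.sem {L Act : Type} (B : DD L Act) (f : L → Bool) : Set Act :=
  B.semNode f B.root

/-- A node is a decision node iff its label is a left injection. -/
def DD.IsDecision {L Act : Type} (B : DD L Act) (n : B.N) : Prop :=
  ∃ l, B.label n = Sum.inl l

/-- `π`-orderedness: labels strictly increase (w.r.t. the ranking `π` of labels)
along edges between decision nodes. -/
def DD.Ordered {L Act : Type} (B : DD L Act) (π : L → ℕ) : Prop :=
  ∀ n b l l', B.label n = Sum.inl l → B.label (B.succ n b) = Sum.inl l' → π l < π l'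

/-- The edge relation of a decision diagram. -/
def DD.Edge {L Act : Type} (B : DD L Act) (n m : B.N) : Prop :=
  B.IsDecision n ∧ ∃ b, m = B.succ n b

/-- The set of nodes reachable from `n`. -/
def DD.Reach {L Act : Type} (B : DD L Act) (n : B.N) : Set B.N :=
  {m | Relation.ReflTransGen B.Edge n m}

/-- Isomorphism of the subdiagrams rooted at `n` and `n'`: a bijection between
the reachable node sets mapping root to root and preserving labels and successors. -/
def DD.Iso {L Act : Type} (B : DD L Act) (n n' : B.N) : Prop :=
  ∃ φ : B.N → B.N,
    Set.BijOn φ (B.Reach n) (B.Reach n') ∧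
    φ n = n' ∧
    (∀ m ∈ B.Reach n, B.label (φ m) = B.label m) ∧
    (∀ m ∈ B.Reach n, B.IsDecision m → ∀ b, φ (B.succ m b) = B.succ (φ m) b)

/-- Reducedness: every decision node is essential and no two distinct nodes
root isomorphic subdiagrams. -/
def DD.Reduced {L Act : Type} (B : DD L Act) : Prop :=
  (∀ n, B.IsDecision n → B.succ n false ≠ B.succ n true) ∧
  (∀ n n', B.Iso n n' → n = n')

/-- Following a sequence of decision bits from a node. -/
def DD.follow {L Act : Type} (B : DD L Act) : B.N → List Bool → B.N
  | n, [] => n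
  | n, b :: bs => B.follow (B.succ n b) bs

/-- `bs` encodes a path from the root to an action node: all intermediate nodes
are decision nodes and the final node is an action node. -/
def DD.IsPathToAction {L Act : Type} (B : DD L Act) (bs : List Bool) : Prop :=
  (∀ i, i < bs.length → B.IsDecision (B.follow B.root (bs.take i))) ∧
  (∃ A : Set Act, B.label (B.follow B.root bs) = Sum.inr A)

/-- Predicate decision diagrams: decision diagrams labeled by axis-aligned predicates. -/
abbrev PDD (Var Act : Type) := DD (APred Var) Act

/-- Semantics of a PDD on an evaluation `ε : Var → ℚ`. -/
def PDD.sem {Var Act : Type} (P : PDD Var Act) (ε : Var → ℚ) : Set Act :=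
  DD.sem P (fun p => p.holds ε)

/-- The path encoded by `bs` is consistent with the evaluation `ε`:
at every step, the decision bit matches the truth value of the node's predicate. -/
def PDD.PathConsistentWith {Var Act : Type} (P : PDD Var Act) (bs : List Bool)
    (ε : Var → ℚ) : Prop :=
  ∀ i, (h : i < bs.length) → ∀ p, P.label (P.follow P.root (bs.take i)) = Sum.inl p →
    p.holds ε = bs.get ⟨i, h⟩

/-- A PDD is consistent if every path from the root to an action node is
consistent with some evaluation. -/
def PDD.Consistent {Var Act : Type} (P : PDD Var Act) : Prop :=
  ∀ bs : List Bool, P.IsPathToAction bs → ∃ ε : Var → ℚ, P.PathConsistentWith bs ε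

/-- The `γ`-lifting of an evaluation `ε : Var → ℚ` to a Boolean valuation of `PVar`. -/
def liftEval {Var PVar : Type} (γ : PVar → APred Var) (ε : Var → ℚ) : PVar → Bool :=
  fun x => (γ x).holds ε

/-- The PDD `γ(B)` arising from a BDD `B` by relabeling every decision node `d`
with the predicate `γ (λ d)`. -/
def DD.relabel {L L' Act : Type} (B : DD L Act) (γ : L → L') : DD L' Act where
  N := B.N
  fin := B.fin
  label := fun n => (B.label n).map γ id
  succ := B.succ
  root := B.root
  rk := B.rk
  rk_lt := by
    intro n b l' h
    cases hl : B.label n with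
    | inl l => exact B.rk_lt n b l hl
    | inr A => simp [hl, Sum.map] at h

/-!
The diagram `B'` depends on `B` only through its semantics `F = B.sem`. Query the variables in
increasing `π`-order, carrying the valuation `σ` of the variables decided so far: a branch
`x ↦ c` is kept only if `σ[x ↦ c]` is still the `γ`-lifting of some evaluation, and a decision
between two equal subtrees is skipped. The leaves then compute `F` on every lifted valuation,
every path is realised by an evaluation by construction, and the diagram whose nodes are the
distinct subtrees of this tree is reduced (isomorphic subdiagrams are equal trees) and
`π`-ordered.
-/

namespace DD

variable {L Act : Type} (B : DD L Act)

theorem semNode_of_label_inr (f : L → Bool) {n : B.N} {A : Set Act}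
    (h : B.label n = Sum.inr A) : B.semNode f n = A := by
  rw [DD.semNode]
  split <;> simp_all

theorem semNode_of_label_inl (f : L → Bool) {n : B.N} {l : L}
    (h : B.label n = Sum.inl l) : B.semNode f n = B.semNode f (B.succ n (f l)) := by
  rw [DD.semNode]
  split <;> simp_all

theorem follow_relabel {L' : Type} (γ : L → L') (n : B.N) (bs : List Bool) :
    (B.relabel γ).follow n bs = B.follow n bs := by
  induction bs generalizing n with
  | nil => rfl
  | cons c bs ih => exact ih (B.succ n c)

variable {B}

theorem reach_subset {n m : B.N} (hm : m ∈ B.Reach n) : B.Reach m ⊆ B.Reach n :=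
  fun _ hq => hm.trans hq

theorem succ_mem_reach {n : B.N} (hn : B.IsDecision n) (c : Bool) : B.succ n c ∈ B.Reach n :=
  Relation.ReflTransGen.single ⟨hn, c, rfl⟩

theorem Iso.label_eq {n n' : B.N} (h : B.Iso n n') : B.label n' = B.label n := by
  obtain ⟨φ, -, rfl, hlabel, -⟩ := h
  exact hlabel n Relation.ReflTransGen.refl

theorem Iso.succ {n n' : B.N} (h : B.Iso n n') (hn : B.IsDecision n) (c : Bool) :
    B.Iso (B.succ n c) (B.succ n' c) := by
  obtain ⟨φ, hbij, rfl, hlabel, hsucc⟩ := h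
  have hφc : φ (B.succ n c) = B.succ (φ n) c := hsucc n Relation.ReflTransGen.refl hn c
  have hsub : B.Reach (B.succ n c) ⊆ B.Reach n := reach_subset (succ_mem_reach hn c)
  have hdec : ∀ p ∈ B.Reach n, (B.IsDecision (φ p) ↔ B.IsDecision p) := fun p hp => by
    simp only [DD.IsDecision, hlabel p hp]
  have hmaps : Set.MapsTo φ (B.Reach (B.succ n c)) (B.Reach (B.succ (φ n) c)) := by
    intro q hq
    induction hq with
    | refl => rw [hφc]; exact Relation.ReflTransGen.refl
    | tail _ hedge ih =>
      obtain ⟨hp, d, rfl⟩ := hedge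
      have hpn := hsub ‹_›
      rw [hsucc _ hpn hp d]
      exact ih.tail ⟨(hdec _ hpn).2 hp, d, rfl⟩
  have hsurj : Set.SurjOn φ (B.Reach (B.succ n c)) (B.Reach (B.succ (φ n) c)) := by
    intro q' hq'
    induction hq' with
    | refl => exact ⟨_, Relation.ReflTransGen.refl, hφc⟩
    | tail _ hedge ih =>
      obtain ⟨p, hp, rfl⟩ := ih
      obtain ⟨hφp, d, rfl⟩ := hedge
      have hpd := (hdec p (hsub hp)).1 hφp
      exact ⟨B.succ p d, hp.tail ⟨hpd, d, rfl⟩, hsucc p (hsub hp) hpd d⟩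
  exact ⟨φ, ⟨hmaps, hbij.injOn.mono hsub, hsurj⟩, hφc,
    fun q hq => hlabel q (hsub hq), fun q hq => hsucc q (hsub hq)⟩

end DD

def Realizable {L : Type} (R : Set (L → Bool)) (S : Set L) (σ : L → Bool) : Prop :=
  ∃ τ ∈ R, Set.EqOn τ σ S

namespace Realizable

variable {L : Type} {R : Set (L → Bool)} {S : Set L} {σ : L → Bool}

theorem mono {S' : Set L} (hS : S' ⊆ S) (h : Realizable R S σ) : Realizable R S' σ :=
  let ⟨τ, hτ, heq⟩ := h
  ⟨τ, hτ, heq.mono hS⟩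

theorem exists_update [DecidableEq L] (h : Realizable R S σ) (x : L) :
    ∃ c, Realizable R (insert x S) (Function.update σ x c) := by
  obtain ⟨τ, hτ, heq⟩ := h
  refine ⟨τ x, τ, hτ, ?_⟩
  rintro y (rfl | hy)
  · simp
  · by_cases hyx : y = x
    · subst hyx; simp
    · simpa [hyx] using heq hy

end Realizable

inductive DTree (L α : Type) where
  | leaf (a : α)
  | node (x : L) (t₀ t₁ : DTree L α)

namespace DTree

variable {L α : Type}

def rootLabel : DTree L α → L ⊕ α
  | leaf a => Sum.inr a
  | node x _ _ => Sum.inl x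

def child : DTree L α → Bool → DTree L α
  | leaf a, _ => leaf a
  | node _ t₀ t₁, c => bif c then t₁ else t₀

def height : DTree L α → ℕ
  | leaf _ => 0
  | node _ t₀ t₁ => max t₀.height t₁.height + 1

def subtrees : DTree L α → List (DTree L α)
  | leaf a => [leaf a]
  | node x t₀ t₁ => node x t₀ t₁ :: (t₀.subtrees ++ t₁.subtrees)

def labels : DTree L α → Set L
  | leaf _ => ∅
  | node x t₀ t₁ => insert x (t₀.labels ∪ t₁.labels)

def eval (f : L → Bool) : DTree L α → α
  | leaf a => a
  | node x t₀ t₁ => bif f x then t₁.eval f else t₀.eval f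

def follow (t : DTree L α) : List Bool → DTree L α
  | [] => t
  | c :: bs => (t.child c).follow bs

def AllNodes (P : L → DTree L α → DTree L α → Prop) : DTree L α → Prop
  | leaf _ => True
  | node x t₀ t₁ => P x t₀ t₁ ∧ t₀.AllNodes P ∧ t₁.AllNodes P

def Essential : DTree L α → Prop :=
  AllNodes fun _ t₀ t₁ => t₀ ≠ t₁

def Ordered (π : L → ℕ) : DTree L α → Prop :=
  AllNodes fun x t₀ t₁ => ∀ y ∈ t₀.labels ∪ t₁.labels, π x < π y

def Consistent (τ : L → Bool) : DTree L α → List Bool → Prop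
  | node x t₀ t₁, c :: bs => τ x = c ∧ (bif c then t₁ else t₀).Consistent τ bs
  | _, _ => True

theorem height_child_lt {t : DTree L α} {x : L} (ht : t.rootLabel = Sum.inl x) (c : Bool) :
    (t.child c).height < t.height := by
  cases t with
  | leaf a => cases ht
  | node y t₀ t₁ => cases c <;> simp [child, height]

theorem mem_subtrees_self (t : DTree L α) : t ∈ t.subtrees := by
  cases t <;> simp [subtrees]

theorem subtrees_subset_of_mem {s t : DTree L α} (h : s ∈ t.subtrees) :
    s.subtrees ⊆ t.subtrees := by
  induction t with
  | leaf a =>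
    obtain rfl : s = leaf a := by simpa [subtrees] using h
    exact List.Subset.refl _
  | node x t₀ t₁ ih₀ ih₁ =>
    simp only [subtrees, List.mem_cons, List.mem_append] at h
    rcases h with rfl | h | h
    · exact List.Subset.refl _
    · exact List.Subset.trans (ih₀ h) fun u hu => by simp [subtrees, hu]
    · exact List.Subset.trans (ih₁ h) fun u hu => by simp [subtrees, hu]

theorem child_mem_subtrees {s t : DTree L α} (h : s ∈ t.subtrees) (c : Bool) :
    s.child c ∈ t.subtrees := by
  refine subtrees_subset_of_mem h ?_
  cases s with
  | leaf a => exact mem_subtrees_self _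
  | node x t₀ t₁ => cases c <;> simp [child, subtrees, mem_subtrees_self]

theorem mem_labels_of_rootLabel {t : DTree L α} {x : L} (h : t.rootLabel = Sum.inl x) :
    x ∈ t.labels := by
  cases t with
  | leaf a => cases h
  | node y t₀ t₁ => cases h; exact Set.mem_insert _ _

@[simp]
theorem follow_leaf (a : α) (bs : List Bool) : (leaf a : DTree L α).follow bs = leaf a := by
  induction bs with
  | nil => rfl
  | cons c bs ih => exact ih

theorem AllNodes.of_mem_subtrees {P : L → DTree L α → DTree L α → Prop} {s t : DTree L α}
    (ht : t.AllNodes P) (hs : s ∈ t.subtrees) : s.AllNodes P := by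
  induction t with
  | leaf a =>
    obtain rfl : s = leaf a := by simpa [subtrees] using hs
    exact ht
  | node x t₀ t₁ ih₀ ih₁ =>
    simp only [subtrees, List.mem_cons, List.mem_append] at hs
    rcases hs with rfl | hs | hs
    · exact ht
    · exact ih₀ ht.2.1 hs
    · exact ih₁ ht.2.2 hs

theorem Consistent.eq_of_follow_take {τ : L → Bool} {t : DTree L α} {bs : List Bool}
    (h : t.Consistent τ bs) {i : ℕ} (hi : i < bs.length) {x : L} {t₀ t₁ : DTree L α}
    (hfollow : t.follow (bs.take i) = node x t₀ t₁) : τ x = bs[i] := by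
  induction bs generalizing t i with
  | nil => cases hi
  | cons c bs ih =>
    cases t with
    | leaf a => simp at hfollow
    | node y s₀ s₁ =>
      cases i with
      | zero =>
        obtain ⟨rfl, -, -⟩ : y = x ∧ s₀ = t₀ ∧ s₁ = t₁ := by simpa [follow] using hfollow
        exact h.1
      | succ i => exact ih h.2 (by simpa using hi) (by simpa [follow, child] using hfollow)

noncomputable def mkNode (x : L) (t₀ t₁ : DTree L α) : DTree L α := by
  classical exact if t₀ = t₁ then t₀ else node x t₀ t₁

theorem mkNode_of_eq (x : L) (t : DTree L α) : mkNode x t t = t := by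
  simp [mkNode]

theorem mkNode_of_ne (x : L) {t₀ t₁ : DTree L α} (h : t₀ ≠ t₁) :
    mkNode x t₀ t₁ = node x t₀ t₁ := by
  simp [mkNode, h]

theorem labels_mkNode_subset (x : L) (t₀ t₁ : DTree L α) :
    (mkNode x t₀ t₁).labels ⊆ insert x (t₀.labels ∪ t₁.labels) := by
  by_cases h : t₀ = t₁
  · subst h
    rw [mkNode_of_eq, Set.union_self]
    exact Set.subset_insert _ _
  · rw [mkNode_of_ne x h]
    rfl

theorem eval_mkNode (f : L → Bool) (x : L) (t₀ t₁ : DTree L α) :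
    (mkNode x t₀ t₁).eval f = bif f x then t₁.eval f else t₀.eval f := by
  by_cases h : t₀ = t₁
  · subst h
    rw [mkNode_of_eq]
    cases f x <;> rfl
  · rw [mkNode_of_ne x h]
    rfl

theorem AllNodes.mkNode {P : L → DTree L α → DTree L α → Prop} {x : L} {t₀ t₁ : DTree L α}
    (hP : t₀ ≠ t₁ → P x t₀ t₁) (h₀ : t₀.AllNodes P) (h₁ : t₁.AllNodes P) :
    (DTree.mkNode x t₀ t₁).AllNodes P := by
  by_cases h : t₀ = t₁
  · subst h
    rwa [mkNode_of_eq]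
  · rw [mkNode_of_ne x h]
    exact ⟨hP h, h₀, h₁⟩

section toDD

variable {Act : Type}

noncomputable def toDD (t : DTree L (Set Act)) : DD L Act where
  N := {s // s ∈ t.subtrees}
  fin := by classical exact Fintype.subtype t.subtrees.toFinset fun _ => List.mem_toFinset
  label s := s.1.rootLabel
  succ s c := ⟨s.1.child c, child_mem_subtrees s.2 c⟩
  root := ⟨t, mem_subtrees_self t⟩
  rk s := s.1.height
  rk_lt s c _ h := height_child_lt h c

variable {t : DTree L (Set Act)}

theorem toDD_follow (s : t.toDD.N) (bs : List Bool) :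
    (t.toDD.follow s bs).1 = s.1.follow bs := by
  induction bs generalizing s with
  | nil => rfl
  | cons c bs ih => exact ih _

theorem toDD_semNode (f : L → Bool) (s : t.toDD.N) : t.toDD.semNode f s = s.1.eval f := by
  obtain ⟨s, hs⟩ := s
  induction s with
  | leaf a => exact DD.semNode_of_label_inr _ f rfl
  | node x t₀ t₁ ih₀ ih₁ =>
    rw [DD.semNode_of_label_inl t.toDD f (n := ⟨_, hs⟩) (l := x) rfl]
    cases hfx : f x
    · exact (ih₀ _).trans (by simp [eval, hfx])
    · exact (ih₁ _).trans (by simp [eval, hfx])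

theorem toDD_sem (f : L → Bool) : t.toDD.sem f = t.eval f :=
  toDD_semNode f _

theorem ordered_toDD {π : L → ℕ} (ht : t.Ordered π) : t.toDD.Ordered π := by
  rintro ⟨s, hs⟩ c x y hx hy
  cases s with
  | leaf a => cases hx
  | node x' t₀ t₁ =>
    cases hx
    have hy' := mem_labels_of_rootLabel hy
    exact (ht.of_mem_subtrees hs).1 y (by cases c; exacts [Or.inl hy', Or.inr hy'])

theorem eq_of_toDD_iso {s s' : DTree L (Set Act)} (hs : s ∈ t.subtrees)
    (hs' : s' ∈ t.subtrees) (hiso : t.toDD.Iso ⟨s, hs⟩ ⟨s', hs'⟩) : s' = s := by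
  induction s generalizing s' with
  | leaf a =>
    have hlabel : s'.rootLabel = Sum.inr a := hiso.label_eq
    cases s' with
    | leaf a' => cases hlabel; rfl
    | node _ _ _ => cases hlabel
  | node x t₀ t₁ ih₀ ih₁ =>
    have hlabel : s'.rootLabel = Sum.inl x := hiso.label_eq
    cases s' with
    | leaf _ => cases hlabel
    | node x' t₀' t₁' =>
      cases hlabel
      have h₀ : t₀' = t₀ := ih₀ _ _ (hiso.succ ⟨x, rfl⟩ false)
      have h₁ : t₁' = t₁ := ih₁ _ _ (hiso.succ ⟨x, rfl⟩ true)
      rw [h₀, h₁]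

theorem reduced_toDD (ht : t.Essential) : t.toDD.Reduced := by
  refine ⟨?_, ?_⟩
  · rintro ⟨s, hs⟩ ⟨x, hx⟩ heq
    cases s with
    | leaf a => cases hx
    | node x' t₀ t₁ => exact (ht.of_mem_subtrees hs).1 (congrArg Subtype.val heq)
  · rintro ⟨s, hs⟩ ⟨s', hs'⟩ hiso
    exact (Subtype.ext (eq_of_toDD_iso hs hs' hiso)).symm

theorem Consistent.pathConsistentWith_relabel_toDD {Var : Type} {γ : L → APred Var}
    {ε : Var → ℚ} {bs : List Bool} (h : t.Consistent (liftEval γ ε) bs) :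
    PDD.PathConsistentWith (t.toDD.relabel γ) bs ε := by
  intro i hi p hp
  have hfollow :
      ((t.toDD.relabel γ).follow t.toDD.root (bs.take i)).1 = t.follow (bs.take i) := by
    rw [DD.follow_relabel, toDD_follow]
    rfl
  have hlabel : Sum.map γ id (t.follow (bs.take i)).rootLabel = Sum.inl p := by
    rw [← hfollow]
    exact hp
  obtain ⟨x, t₀, t₁, hx, rfl⟩ : ∃ x t₀ t₁, t.follow (bs.take i) = node x t₀ t₁ ∧ p = γ x := by
    generalize t.follow (bs.take i) = s at hlabel ⊢
    cases s <;> simp_all [rootLabel]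
  exact h.eq_of_follow_take hi hx

end toDD

section ofFun

variable (R : Set (L → Bool)) (F : (L → Bool) → α)

-- `σ` records the values of the variables already queried, i.e. those outside `xs`.
noncomputable def ofFun : List L → (L → Bool) → DTree L α
  | [], σ => leaf (F σ)
  | x :: xs, σ =>
    open Classical in
    if Realizable R {y | y ∉ xs} (Function.update σ x true) then
      if Realizable R {y | y ∉ xs} (Function.update σ x false) then
        mkNode x (ofFun xs (Function.update σ x false)) (ofFun xs (Function.update σ x true))
      else ofFun xs (Function.update σ x true)
    else ofFun xs (Function.update σ x false)

variable {R F}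

theorem labels_ofFun_subset (xs : List L) (σ : L → Bool) :
    (ofFun R F xs σ).labels ⊆ {y | y ∈ xs} := by
  induction xs generalizing σ with
  | nil => simp [ofFun, labels]
  | cons x xs ih =>
    have hsub : {y | y ∈ xs} ⊆ {y | y ∈ x :: xs} := fun y hy => List.mem_cons_of_mem x hy
    rw [ofFun]
    split_ifs
    · refine (labels_mkNode_subset _ _ _).trans (Set.insert_subset List.mem_cons_self ?_)
      exact Set.union_subset ((ih _).trans hsub) ((ih _).trans hsub)
    · exact (ih _).trans hsub
    · exact (ih _).trans hsub

theorem essential_ofFun (xs : List L) (σ : L → Bool) : (ofFun R F xs σ).Essential := by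
  induction xs generalizing σ with
  | nil => trivial
  | cons x xs ih =>
    rw [ofFun]
    split_ifs
    · exact AllNodes.mkNode id (ih _) (ih _)
    · exact ih _
    · exact ih _

theorem ordered_ofFun {π : L → ℕ} {xs : List L} (hxs : xs.Pairwise (π · < π ·))
    (σ : L → Bool) : (ofFun R F xs σ).Ordered π := by
  induction xs generalizing σ with
  | nil => trivial
  | cons x xs ih =>
    rw [List.pairwise_cons] at hxs
    have hlt : ∀ σ', ∀ y ∈ (ofFun R F xs σ').labels, π x < π y :=
      fun σ' y hy => hxs.1 y (labels_ofFun_subset xs σ' hy)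
    rw [ofFun]
    split_ifs
    · refine AllNodes.mkNode (fun _ y hy => ?_) (ih hxs.2 _) (ih hxs.2 _)
      rcases hy with hy | hy
      · exact hlt _ y hy
      · exact hlt _ y hy
    · exact ih hxs.2 _
    · exact ih hxs.2 _

theorem eval_ofFun {τ : L → Bool} (hτ : τ ∈ R) (xs : List L) {σ : L → Bool}
    (hσ : Set.EqOn τ σ {y | y ∉ xs}) : (ofFun R F xs σ).eval τ = F τ := by
  induction xs generalizing σ with
  | nil =>
    obtain rfl : τ = σ := funext fun y => hσ (List.not_mem_nil (a := y))
    rfl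
  | cons x xs ih =>
    classical
    have hupd : Set.EqOn τ (Function.update σ x (τ x)) {y | y ∉ xs} := by
      intro y hy
      by_cases hyx : y = x
      · subst hyx; simp
      · simpa [hyx] using hσ (show y ∉ x :: xs by simp_all)
    -- the branch taken by `τ` is realised by `τ` itself, so it is never pruned
    have hreal : Realizable R {y | y ∉ xs} (Function.update σ x (τ x)) := ⟨τ, hτ, hupd⟩
    rw [ofFun]
    split_ifs with h₁ h₀
    · rw [eval_mkNode]
      cases hx : τ x
      · exact ih (hx ▸ hupd)
      · exact ih (hx ▸ hupd)
    · cases hx : τ x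
      · exact absurd (hx ▸ hreal) h₀
      · exact ih (hx ▸ hupd)
    · cases hx : τ x
      · exact ih (hx ▸ hupd)
      · exact absurd (hx ▸ hreal) h₁

theorem exists_consistent_ofFun {xs : List L} (hxs : xs.Nodup) {σ : L → Bool}
    (hσ : Realizable R {y | y ∉ xs} σ) (bs : List Bool) :
    ∃ τ ∈ R, Set.EqOn τ σ {y | y ∉ xs} ∧ (ofFun R F xs σ).Consistent τ bs := by
  induction xs generalizing σ bs with
  | nil =>
    obtain ⟨τ, hτ, heq⟩ := hσ
    exact ⟨τ, hτ, heq, by cases bs <;> trivial⟩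
  | cons x xs ih =>
    classical
    rw [List.nodup_cons] at hxs
    have hchild : ∀ c, Realizable R {y | y ∉ xs} (Function.update σ x c) → ∀ bs,
        ∃ τ ∈ R, Set.EqOn τ σ {y | y ∉ x :: xs} ∧ τ x = c ∧
          (ofFun R F xs (Function.update σ x c)).Consistent τ bs := by
      intro c hc bs
      obtain ⟨τ, hτ, heq, hcons⟩ := ih hxs.2 hc bs
      refine ⟨τ, hτ, fun y hy => ?_, by simpa using heq hxs.1, hcons⟩
      have hy' : y ≠ x ∧ y ∉ xs := by simpa using hy
      simpa [hy'.1] using heq hy'.2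
    have hbranch : ∀ c, Realizable R {y | y ∉ xs} (Function.update σ x c) →
        ∃ τ ∈ R, Set.EqOn τ σ {y | y ∉ x :: xs} ∧
          (ofFun R F xs (Function.update σ x c)).Consistent τ bs := fun c hc =>
      let ⟨τ, hτ, hστ, _, hcons⟩ := hchild c hc bs
      ⟨τ, hτ, hστ, hcons⟩
    obtain ⟨c, hc⟩ := hσ.exists_update x
    have hsome : Realizable R {y | y ∉ xs} (Function.update σ x c) :=
      hc.mono fun y hy => by by_cases hyx : y = x <;> simp_all
    rw [ofFun]
    split_ifs with h₁ h₀
    · by_cases heq : ofFun R F xs (Function.update σ x false) =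
          ofFun R F xs (Function.update σ x true)
      · rw [heq, mkNode_of_eq]
        exact hbranch true h₁
      · rw [mkNode_of_ne x heq]
        cases bs with
        | nil => exact (hbranch true h₁).imp fun _ ⟨hτ, hστ, _⟩ => ⟨hτ, hστ, trivial⟩
        | cons c bs =>
          obtain ⟨τ, hτ, hστ, hx, hcons⟩ := hchild c (by cases c; exacts [h₀, h₁]) bs
          exact ⟨τ, hτ, hστ, hx, by cases c <;> exact hcons⟩
    · exact hbranch true h₁
    · cases c
      · exact hbranch false hsome
      · exact absurd hsome h₁

end ofFun

end DTree

theorem Function.Injective.exists_list_pairwise_lt {L : Type} [Fintype L] {π : L → ℕ}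
    (hπ : Function.Injective π) : ∃ xs : List L, (∀ x, x ∈ xs) ∧ xs.Pairwise (π · < π ·) := by
  let xs := Finset.univ.toList.mergeSort fun x y => decide (π x ≤ π y)
  have hperm : xs.Perm Finset.univ.toList := List.mergeSort_perm _ _
  have hle : xs.Pairwise fun x y => decide (π x ≤ π y) = true :=
    List.pairwise_mergeSort (fun _ _ _ h₁ h₂ => by simp_all; omega)
      (fun x y => by simp; omega) _
  refine ⟨xs, fun x => hperm.mem_iff.2 (by simp), ?_⟩
  exact (hle.and (hperm.nodup_iff.2 (Finset.nodup_toList _))).imp fun h =>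
    lt_of_le_of_ne (by simpa using h.1) (hπ.ne h.2)

theorem predicate_consistency_general
    {Var PVar Act : Type} [Fintype PVar]
    (B : DD PVar Act) (π : PVar → ℕ) (hπ : Function.Injective π)
    (γ : PVar → APred Var) :
    ∃ B' : DD PVar Act, B'.Reduced ∧ B'.Ordered π ∧
      PDD.Consistent (B'.relabel γ) ∧
      ∀ ε : Var → ℚ, B'.sem (liftEval γ ε) = B.sem (liftEval γ ε) := by
  obtain ⟨xs, hall, hsorted⟩ := hπ.exists_list_pairwise_lt
  have hnone : {y | y ∉ xs} = ∅ := Set.eq_empty_of_forall_notMem fun y hy => hy (hall y)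
  let t := DTree.ofFun (Set.range (liftEval γ)) B.sem xs fun _ => false
  refine ⟨t.toDD, DTree.reduced_toDD (DTree.essential_ofFun _ _),
    DTree.ordered_toDD (DTree.ordered_ofFun hsorted _), fun bs _ => ?_, fun ε => ?_⟩
  · have hreal : Realizable (Set.range (liftEval γ)) {y | y ∉ xs} fun _ => false :=
      ⟨_, ⟨0, rfl⟩, by simp [hnone]⟩
    obtain ⟨-, ⟨ε, rfl⟩, -, hcons⟩ :=
      DTree.exists_consistent_ofFun hsorted.nodup hreal bs (F := B.sem)
    exact ⟨ε, hcons.pathConsistentWith_relabel_toDD⟩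
  · rw [DTree.toDD_sem, DTree.eval_ofFun (Set.mem_range_self ε) xs (by simp [hnone])]

/-- For every reduced `π`-ordered BDD `B` over `PVar` and `Act`
and every bijection `γ` from `PVar` onto a set of axis-aligned predicates, there
is a reduced `π`-ordered BDD `B'` that is predicate consistent w.r.t. `γ`
(i.e. the PDD `γ(B')` is consistent) and has the same semantics modulo `γ` as `B`. -/
theorem predicate_consistency
    {Var PVar Act : Type} [Countable Var] [Fintype PVar] [Fintype Act]
    (B : DD PVar Act) (π : PVar → ℕ) (hπ : Function.Injective π)
    (hred : B.Reduced) (hord : B.Ordered π)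
    (γ : PVar → APred Var) (hγ : Function.Injective γ) :
    ∃ B' : DD PVar Act, B'.Reduced ∧ B'.Ordered π ∧
      PDD.Consistent (B'.relabel γ) ∧
      ∀ ε : Var → ℚ, B'.sem (liftEval γ ε) = B.sem (liftEval γ ε) :=
  predicate_consistency_general B π hπ γ
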